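/- Let B₁,…,B_r be connected building sets on pairwise disjoint finite sets S₁,…,S_r of positive integers satisfying max S_i < min S_j whenever i < j, and let B be the combined connected building set on S = S₁ ∪ ⋯ ∪ S_r. Then the B-trees are exactly the trees obtained as follows: choose j ∈ {1,…,r} and a B_i-tree T_i for each i = 1,…,r, and connect the root of each T_k with k ≠ j by an edge to the root of T_j (so the root of T_j becomes the root of T). Moreover, for such a tree T one has des(T) = (r − j) + Σ_{k=1}^r des(T_k). -/

import Mathlib

/-!
Let `T` be a `B`-tree with root in the block `S j`. For any other vertex `x`, the set `T_{≤x}`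
misses the root, so it is not `S` and lies in some `B_k`, hence inside the block of `x`. In a
block `S k` with `k ≠ j`, the children of the root are pairwise incomparable and their subtrees
cover `S k ∈ B`; so there is exactly one of them, and its subtree is `S k`. Cutting the edges from
these children to the root splits `T` into trees `T_k` on the blocks with the same descendant
sets, which translates the `B`-tree axioms for `T` into those for the `T_k` and back. The only new
edges join `root T_k` to `root T_j`, and such an edge is a descent exactly when `j < k`.
-/

open scoped Classical

noncomputable section

/-- A rooted tree on the vertex set `S ⊆ ℕ`, encoded by its root and its parent
function; edges are directed away from the root (so each non-root vertex `i`
carries the edge `(i, parent i)`, with `parent i` closer to the root).  The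
parent function is normalized to be the identity outside `S` and at the root. -/
structure RTree (S : Finset ℕ) where
  root : ℕ
  root_mem : root ∈ S
  parent : ℕ → ℕ
  parent_out : ∀ i, i ∉ S → parent i = i
  parent_root : parent root = root
  parent_mem : ∀ i ∈ S, parent i ∈ S
  reach : ∀ i ∈ S, ∃ k, parent^[k] i = root

namespace RTree

variable {S : Finset ℕ}

/-- The set `T_{≤ i}` of descendants of `i` in `T` (including `i` itself). -/
def desc (T : RTree S) (i : ℕ) : Finset ℕ :=
  S.filter fun j => ∃ k, T.parent^[k] j = i

/-- The depth of a vertex: its distance to the root. -/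
def dp (T : RTree S) (x : ℕ) : ℕ :=
  sInf {k | T.parent^[k] x = T.root}

/-- The depth of the tree: the maximal depth of a vertex. -/
def depth (T : RTree S) : ℕ := S.sup T.dp

/-- The set of descent edges `(i, parent i)` with `i > parent i`, recorded by
the child endpoint `i`. -/
def desSet (T : RTree S) : Finset ℕ :=
  S.filter fun i => i ≠ T.root ∧ T.parent i < i

/-- The number of descents of `T`. -/
def des (T : RTree S) : ℕ := T.desSet.card

/-- The major index of `T`: the sum, over all descent edges `(i,j)` of `T`
(with `j = parent i`), of `depth T - dp j`, i.e. of the minimal rank of `j`. -/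
def maj (T : RTree S) : ℕ :=
  ∑ i ∈ T.desSet, (T.depth - T.dp (T.parent i))

/-- The statistic `μ(T)`: the sum, over all edges `(i,j)` of `T`
(with `j = parent i`), of `depth T - dp j`. -/
def mu (T : RTree S) : ℕ :=
  ∑ i ∈ S.filter (fun i => i ≠ T.root), (T.depth - T.dp (T.parent i))

end RTree

/-- `B` is a building set on the finite ground set `S`. -/
def IsBuildingSet (S : Finset ℕ) (B : Finset (Finset ℕ)) : Prop :=
  (∀ I ∈ B, I ⊆ S ∧ I.Nonempty) ∧
  (∀ I ∈ B, ∀ J ∈ B, (I ∩ J).Nonempty → I ∪ J ∈ B) ∧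
  (∀ i ∈ S, ({i} : Finset ℕ) ∈ B)

/-- `B` is a connected building set on `S`. -/
def IsConnBuildingSet (S : Finset ℕ) (B : Finset (Finset ℕ)) : Prop :=
  IsBuildingSet S B ∧ S ∈ B

/-- `T` is a `B`-tree: all descendant sets belong to `B`, and no union of
descendant sets of `k ≥ 2` pairwise incomparable nodes belongs to `B`. -/
def IsBTree (S : Finset ℕ) (B : Finset (Finset ℕ)) (T : RTree S) : Prop :=
  (∀ i ∈ S, T.desc i ∈ B) ∧
  ∀ I : Finset ℕ, I ⊆ S → 2 ≤ I.card →
    (∀ i ∈ I, ∀ j ∈ I, i ≠ j → i ∉ T.desc j ∧ j ∉ T.desc i) →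
    I.biUnion T.desc ∉ B

/-- `T` is the rooted tree obtained from the trees `Ts k` by connecting the
root of each `Ts k`, `k ≠ j`, by an edge to the root of `Ts j` (the root of
`Ts j` becoming the root of `T`). -/
def Glue {r : ℕ} {S : Fin r → Finset ℕ} {Sc : Finset ℕ}
    (j : Fin r) (Ts : ∀ k, RTree (S k)) (T : RTree Sc) : Prop :=
  T.root = (Ts j).root ∧
  (∀ k : Fin r, k ≠ j → T.parent (Ts k).root = (Ts j).root) ∧
  ∀ k : Fin r, ∀ x ∈ S k, x ≠ (Ts k).root → T.parent x = (Ts k).parent x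

open Finset Function

lemma Pairwise.elim_finset {ι α : Type*} {S : ι → Finset α} (h : Pairwise (Disjoint on S))
    {x : α} {k k' : ι} (hk : x ∈ S k) (hk' : x ∈ S k') : k = k' := by
  by_contra hne
  exact disjoint_left.1 (h hne) hk hk'

namespace Function

variable {α : Type*}

lemma exists_iterate_eq_of_forall_eq_or_eq {f g : α → α} (h : ∀ x, g x = x ∨ g x = f x)
    {x y : α} {m : ℕ} (hm : g^[m] x = y) : ∃ n, f^[n] x = y := by
  induction m generalizing x with
  | zero => exact ⟨0, hm⟩
  | succ m ih =>
    rw [iterate_succ_apply] at hm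
    rcases h x with hx | hx
    · exact ih (hx ▸ hm)
    · obtain ⟨n, hn⟩ := ih (hx ▸ hm)
      exact ⟨n + 1, hn⟩

lemma exists_iterate_eq_of_eqOn {f g : α → α} {U : Set α} {y : α}
    (h : ∀ x ∈ U, x ≠ y → g x = f x ∧ f x ∈ U) {x : α} (hx : x ∈ U) {m : ℕ}
    (hm : f^[m] x = y) : ∃ n, g^[n] x = y := by
  induction m generalizing x with
  | zero => exact ⟨0, hm⟩
  | succ m ih =>
    by_cases hxy : x = y
    · exact ⟨0, hxy⟩
    obtain ⟨hgf, hfU⟩ := h x hx hxy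
    obtain ⟨n, hn⟩ := ih hfU hm
    exact ⟨n + 1, by rwa [iterate_succ_apply, hgf]⟩

end Function

namespace RTree

variable {S : Finset ℕ} (T : RTree S)

lemma mem_desc {i y : ℕ} : y ∈ T.desc i ↔ y ∈ S ∧ ∃ k, T.parent^[k] y = i := by
  simp [desc]

lemma mem_desc_self {i : ℕ} (hi : i ∈ S) : i ∈ T.desc i :=
  T.mem_desc.2 ⟨hi, 0, rfl⟩

lemma desc_root : T.desc T.root = S := by
  ext x
  simpa [mem_desc] using T.reach x

lemma root_notMem_desc {i : ℕ} (hi : i ≠ T.root) : T.root ∉ T.desc i := by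
  intro hmem
  obtain ⟨-, k, hk⟩ := T.mem_desc.1 hmem
  rw [iterate_fixed T.parent_root] at hk
  exact hi hk.symm

lemma parent_mem_desc {c x : ℕ} (hx : x ∈ T.desc c) (hxc : x ≠ c) : T.parent x ∈ T.desc c := by
  obtain ⟨hxS, m, hm⟩ := T.mem_desc.1 hx
  cases m with
  | zero => exact absurd hm hxc
  | succ m => exact T.mem_desc.2 ⟨T.parent_mem x hxS, m, hm⟩

lemma mem_desc_of_parent_mem_desc {c x : ℕ} (hx : x ∈ S) (h : T.parent x ∈ T.desc c) :
    x ∈ T.desc c := by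
  obtain ⟨-, m, hm⟩ := T.mem_desc.1 h
  exact T.mem_desc.2 ⟨hx, m + 1, hm⟩

lemma exists_parent_eq_root {z : ℕ} (hz : z ∈ S) (hzr : z ≠ T.root) :
    ∃ c ∈ S, c ≠ T.root ∧ T.parent c = T.root ∧ z ∈ T.desc c := by
  obtain ⟨m, hm⟩ := T.reach z hz
  induction m generalizing z with
  | zero => exact absurd hm hzr
  | succ m ih =>
    by_cases hpz : T.parent z = T.root
    · exact ⟨z, hz, hzr, hpz, T.mem_desc_self hz⟩
    obtain ⟨c, hcS, hcr, hpc, hzc⟩ := ih (T.parent_mem z hz) hpz hm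
    exact ⟨c, hcS, hcr, hpc, T.mem_desc_of_parent_mem_desc hz hzc⟩

lemma notMem_desc_of_parent_eq_root {c c' : ℕ} (hc : T.parent c = T.root)
    (hc' : c' ≠ T.root) (hne : c ≠ c') : c ∉ T.desc c' := by
  intro hmem
  obtain ⟨-, m, hm⟩ := T.mem_desc.1 hmem
  cases m with
  | zero => exact hne hm
  | succ m =>
    rw [iterate_succ_apply, hc, iterate_fixed T.parent_root] at hm
    exact hc' hm.symm

lemma root_notMem_of_antichain {I : Finset ℕ} (hI : I ⊆ S) (h2 : 2 ≤ I.card)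
    (hanti : ∀ i ∈ I, ∀ j ∈ I, i ≠ j → i ∉ T.desc j ∧ j ∉ T.desc i) : T.root ∉ I := by
  intro hr
  obtain ⟨i, hi, hne⟩ := exists_mem_ne h2 T.root
  exact (hanti i hi T.root hr hne).1 (T.desc_root.symm ▸ hI hi)

def restrict (U : Finset ℕ) (ρ : ℕ) (hρ : ρ ∈ U)
    (hU : ∀ x ∈ U, x ≠ ρ → T.parent x ∈ U) (hreach : ∀ x ∈ U, ∃ m, T.parent^[m] x = ρ) :
    RTree U where
  root := ρ
  root_mem := hρ
  parent x := if x ∈ U ∧ x ≠ ρ then T.parent x else x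
  parent_out _ hx := if_neg fun h => hx h.1
  parent_root := if_neg fun h => h.2 rfl
  parent_mem x hx := by
    split_ifs with h
    · exact hU x hx h.2
    · exact hx
  reach x hx := by
    obtain ⟨m, hm⟩ := hreach x hx
    refine exists_iterate_eq_of_eqOn (U := (U : Set ℕ)) (fun y hy hyρ => ?_) hx hm
    exact ⟨if_pos ⟨hy, hyρ⟩, hU y hy hyρ⟩

lemma restrict_parent {U : Finset ℕ} {ρ : ℕ} (hρ : ρ ∈ U) (hU : ∀ x ∈ U, x ≠ ρ → T.parent x ∈ U)
    (hreach : ∀ x ∈ U, ∃ m, T.parent^[m] x = ρ) {x : ℕ} (hx : x ∈ U) (hxρ : x ≠ ρ) :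
    (T.restrict U ρ hρ hU hreach).parent x = T.parent x :=
  if_pos ⟨hx, hxρ⟩

end RTree

section Glue

variable {r : ℕ} {S : Fin r → Finset ℕ} {j : Fin r} {Ts : ∀ k, RTree (S k)}
  {T : RTree (univ.biUnion S)}

lemma Glue.parent_eq_or_eq_root (hg : Glue j Ts T) {k : Fin r} {y : ℕ} (hy : y ∈ S k) :
    T.parent y = (Ts k).parent y ∨ T.parent y = T.root := by
  obtain ⟨hroot, hroots, hparent⟩ := hg
  by_cases hyk : y = (Ts k).root
  · right
    by_cases hkj : k = j
    · subst hkj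
      rw [hyk, ← hroot, T.parent_root]
    · rw [hyk, hroots k hkj, hroot]
  · exact Or.inl (hparent k y hy hyk)

lemma Glue.ne_root (hdisj : Pairwise (Disjoint on S)) (hg : Glue j Ts T) {k : Fin r} {i : ℕ}
    (hi : i ∈ S k) (hik : i ≠ (Ts k).root) : i ≠ T.root := by
  rintro rfl
  obtain rfl : k = j := hdisj.elim_finset hi (hg.1 ▸ (Ts j).root_mem)
  exact hik hg.1

lemma Glue.desc_eq (hdisj : Pairwise (Disjoint on S)) (hg : Glue j Ts T) {k : Fin r} {i : ℕ}
    (hi : i ∈ S k) (hiT : i ≠ T.root) : T.desc i = (Ts k).desc i := by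
  ext y
  simp only [RTree.mem_desc]
  constructor
  · rintro ⟨hy, m, hm⟩
    induction m generalizing y with
    | zero => exact ⟨(show y = i from hm) ▸ hi, 0, hm⟩
    | succ m ih =>
      obtain ⟨k', -, hyk'⟩ := mem_biUnion.1 hy
      rcases hg.parent_eq_or_eq_root hyk' with hpy | hpy
      · have hpyk' : T.parent y ∈ S k' := hpy ▸ (Ts k').parent_mem y hyk'
        obtain ⟨hpyk, n, hn⟩ := ih (T.parent y) (T.parent_mem y hy) hm
        obtain rfl : k' = k := hdisj.elim_finset hpyk' hpyk
        exact ⟨hyk', n + 1, by rwa [iterate_succ_apply, ← hpy]⟩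
      · rw [iterate_succ_apply, hpy, iterate_fixed T.parent_root] at hm
        exact absurd hm.symm hiT
  · rintro ⟨hy, m, hm⟩
    refine ⟨mem_biUnion.2 ⟨k, mem_univ k, hy⟩,
      exists_iterate_eq_of_forall_eq_or_eq (fun x => ?_) hm⟩
    by_cases hx : x ∈ S k ∧ x ≠ (Ts k).root
    · exact Or.inr (hg.2.2 k x hx.1 hx.2).symm
    · rw [not_and_or, not_not] at hx
      rcases hx with hx | rfl
      · exact Or.inl ((Ts k).parent_out x hx)
      · exact Or.inl (Ts k).parent_root

lemma Glue.isDescent_iff (hdisj : Pairwise (Disjoint on S))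
    (horder : ∀ i j : Fin r, i < j → ∀ x ∈ S i, ∀ y ∈ S j, x < y) (hg : Glue j Ts T)
    {k : Fin r} {i : ℕ} (hi : i ∈ S k) :
    (i ≠ T.root ∧ T.parent i < i) ↔
      (i ≠ (Ts k).root ∧ (Ts k).parent i < i) ∨ (i = (Ts k).root ∧ j < k) := by
  by_cases hik : i = (Ts k).root
  · subst hik
    by_cases hkj : k = j
    · subst hkj
      simp [hg.1]
    have hne : (Ts k).root ≠ T.root := fun h =>
      hkj (hdisj.elim_finset hi (h ▸ hg.1 ▸ (Ts j).root_mem))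
    have hlt : (Ts j).root < (Ts k).root ↔ j < k := by
      rcases lt_or_gt_of_ne hkj with hkj' | hjk
      · have := horder k j hkj' _ hi _ (Ts j).root_mem
        exact ⟨fun h => absurd h (lt_asymm this), fun h => absurd h (lt_asymm hkj')⟩
      · exact iff_of_true (horder j k hjk _ (Ts j).root_mem _ hi) hjk
    simp [hne, hg.2.1 k hkj, hlt]
  · simp [hik, hg.ne_root hdisj hi hik, hg.2.2 k i hi hik]

lemma Glue.des_eq (hdisj : Pairwise (Disjoint on S))
    (horder : ∀ i j : Fin r, i < j → ∀ x ∈ S i, ∀ y ∈ S j, x < y) (hg : Glue j Ts T) :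
    T.des = (r - 1 - (j : ℕ)) + ∑ k : Fin r, (Ts k).des := by
  have hblock : ∀ k, ((S k).filter fun i => i ≠ T.root ∧ T.parent i < i).card =
      (Ts k).des + if j < k then 1 else 0 := by
    intro k
    rw [filter_congr fun i hi => hg.isDescent_iff hdisj horder hi, filter_or,
      card_union_of_disjoint (disjoint_filter.2 fun i _ h h' => h.1 h'.1)]
    congr 1
    by_cases hjk : j < k <;> simp [hjk, filter_eq', (Ts k).root_mem]
  rw [RTree.des, RTree.desSet, filter_biUnion, card_biUnion, sum_congr rfl fun k _ => hblock k,
    sum_add_distrib, add_comm, sum_boole, Nat.cast_id, filter_lt_eq_Ioi, Fin.card_Ioi]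
  exact fun k _ k' _ hkk' => disjoint_filter_filter (hdisj hkk')

end Glue

section BTree

variable {r : ℕ} {S : Fin r → Finset ℕ} {B : Fin r → Finset (Finset ℕ)} {j : Fin r}
  {Ts : ∀ k, RTree (S k)} {T : RTree (univ.biUnion S)}

lemma desc_mem_of_isBTree (hdisj : Pairwise (Disjoint on S))
    (hB : ∀ k, IsConnBuildingSet (S k) (B k))
    (hT : IsBTree (univ.biUnion S) (univ.biUnion B ∪ {univ.biUnion S}) T) {k : Fin r} {x : ℕ}
    (hx : x ∈ S k) (hxr : x ≠ T.root) : T.desc x ∈ B k := by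
  have hxS : x ∈ univ.biUnion S := subset_biUnion_of_mem S (mem_univ k) hx
  rcases mem_union.1 (hT.1 x hxS) with hmem | hmem
  · obtain ⟨m, -, hm⟩ := mem_biUnion.1 hmem
    obtain rfl : m = k := hdisj.elim_finset (((hB m).1.1 _ hm).1 (T.mem_desc_self hxS)) hx
    exact hm
  · refine absurd ?_ (T.root_notMem_desc hxr)
    rw [mem_singleton.1 hmem]
    exact T.root_mem

lemma desc_subset_of_isBTree (hdisj : Pairwise (Disjoint on S))
    (hB : ∀ k, IsConnBuildingSet (S k) (B k))
    (hT : IsBTree (univ.biUnion S) (univ.biUnion B ∪ {univ.biUnion S}) T) {k : Fin r} {x : ℕ}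
    (hx : x ∈ S k) (hxr : x ≠ T.root) : T.desc x ⊆ S k :=
  ((hB k).1.1 _ (desc_mem_of_isBTree hdisj hB hT hx hxr)).1

lemma parent_mem_of_isBTree (hdisj : Pairwise (Disjoint on S))
    (hB : ∀ k, IsConnBuildingSet (S k) (B k))
    (hT : IsBTree (univ.biUnion S) (univ.biUnion B ∪ {univ.biUnion S}) T) {k : Fin r} {x : ℕ}
    (hx : x ∈ S k) (hpx : T.parent x ≠ T.root) : T.parent x ∈ S k := by
  have hxS : x ∈ univ.biUnion S := subset_biUnion_of_mem S (mem_univ k) hx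
  obtain ⟨k', -, hk'⟩ := mem_biUnion.1 (T.parent_mem x hxS)
  have hxd : x ∈ T.desc (T.parent x) :=
    T.mem_desc_of_parent_mem_desc hxS (T.mem_desc_self (T.parent_mem x hxS))
  obtain rfl : k' = k := hdisj.elim_finset (desc_subset_of_isBTree hdisj hB hT hk' hpx hxd) hx
  exact hk'

lemma exists_desc_eq_of_isBTree (hdisj : Pairwise (Disjoint on S))
    (hB : ∀ k, IsConnBuildingSet (S k) (B k))
    (hT : IsBTree (univ.biUnion S) (univ.biUnion B ∪ {univ.biUnion S}) T) {k : Fin r}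
    (hk : T.root ∉ S k) : ∃ c ∈ S k, T.parent c = T.root ∧ T.desc c = S k := by
  set C := (S k).filter fun c => T.parent c = T.root
  have hCr : ∀ c ∈ C, c ≠ T.root := fun c hc h => hk (h ▸ (mem_filter.1 hc).1)
  have hunion : C.biUnion T.desc = S k := by
    refine Subset.antisymm (biUnion_subset.2 fun c hc =>
      desc_subset_of_isBTree hdisj hB hT (mem_filter.1 hc).1 (hCr c hc)) fun z hz => ?_
    have hzS := subset_biUnion_of_mem S (mem_univ k) hz
    obtain ⟨c, hcS, hcr, hpc, hzc⟩ := T.exists_parent_eq_root hzS fun h => hk (h ▸ hz)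
    obtain ⟨k', -, hck'⟩ := mem_biUnion.1 hcS
    obtain rfl : k' = k := hdisj.elim_finset (desc_subset_of_isBTree hdisj hB hT hck' hcr hzc) hz
    exact mem_biUnion.2 ⟨c, mem_filter.2 ⟨hck', hpc⟩, hzc⟩
  have hcard : C.card = 1 := by
    have hpos : 0 < C.card := by
      obtain ⟨z, hz⟩ := ((hB k).1.1 _ (hB k).2).2
      rw [← hunion] at hz
      obtain ⟨c, hc, -⟩ := mem_biUnion.1 hz
      exact card_pos.2 ⟨c, hc⟩
    have hlt : ¬ 2 ≤ C.card := fun h2 =>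
      hT.2 C (filter_subset _ _ |>.trans (subset_biUnion_of_mem S (mem_univ k))) h2
        (fun a ha b hb hab => ⟨T.notMem_desc_of_parent_eq_root (mem_filter.1 ha).2 (hCr b hb) hab,
          T.notMem_desc_of_parent_eq_root (mem_filter.1 hb).2 (hCr a ha) (Ne.symm hab)⟩)
        (hunion ▸ mem_union_left _ (mem_biUnion.2 ⟨k, mem_univ k, (hB k).2⟩))
    omega
  obtain ⟨c, hc⟩ := card_eq_one.1 hcard
  have hcC : c ∈ C := hc ▸ mem_singleton_self c
  refine ⟨c, (mem_filter.1 hcC).1, (mem_filter.1 hcC).2, ?_⟩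
  rwa [hc, singleton_biUnion] at hunion

lemma exists_glue_of_isBTree (hdisj : Pairwise (Disjoint on S))
    (hB : ∀ k, IsConnBuildingSet (S k) (B k))
    (hT : IsBTree (univ.biUnion S) (univ.biUnion B ∪ {univ.biUnion S}) T) :
    ∃ (j : Fin r) (Ts : ∀ k, RTree (S k)), Glue j Ts T := by
  obtain ⟨j, -, hj⟩ := mem_biUnion.1 T.root_mem
  have hblock : ∀ k, ∃ Tk : RTree (S k), (k = j → Tk.root = T.root) ∧
      (k ≠ j → T.parent Tk.root = T.root) ∧
      ∀ x ∈ S k, x ≠ Tk.root → T.parent x = Tk.parent x := by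
    intro k
    by_cases hkj : k = j
    · subst hkj
      have hclosed : ∀ x ∈ S k, x ≠ T.root → T.parent x ∈ S k := fun x hx _ => by
        by_cases hpx : T.parent x = T.root
        · exact hpx ▸ hj
        · exact parent_mem_of_isBTree hdisj hB hT hx hpx
      exact ⟨T.restrict (S k) T.root hj hclosed
          (fun x hx => T.reach x (subset_biUnion_of_mem S (mem_univ k) hx)),
        fun _ => rfl, fun h => absurd rfl h, fun x hx hxr => (T.restrict_parent _ _ _ hx hxr).symm⟩
    · obtain ⟨c, hcS, hpc, hc⟩ :=
        exists_desc_eq_of_isBTree hdisj hB hT fun h => hkj (hdisj.elim_finset h hj)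
      rw [← hc]
      exact ⟨T.restrict (T.desc c) c (hc ▸ hcS) (fun _ => T.parent_mem_desc)
          (fun x hx => (T.mem_desc.1 hx).2),
        fun h => absurd h hkj, fun _ => hpc, fun x hx hxc => (T.restrict_parent _ _ _ hx hxc).symm⟩
  choose Ts hroot hparent_root hparent using hblock
  exact ⟨j, Ts, (hroot j rfl).symm, fun k hk => hroot j rfl ▸ hparent_root k hk, hparent⟩

lemma Glue.isBTree_block (hdisj : Pairwise (Disjoint on S))
    (hB : ∀ k, IsConnBuildingSet (S k) (B k)) (hg : Glue j Ts T)
    (hT : IsBTree (univ.biUnion S) (univ.biUnion B ∪ {univ.biUnion S}) T) (k : Fin r) :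
    IsBTree (S k) (B k) (Ts k) := by
  constructor
  · intro i hi
    by_cases hik : i = (Ts k).root
    · rw [hik, (Ts k).desc_root]
      exact (hB k).2
    · rw [← hg.desc_eq hdisj hi (hg.ne_root hdisj hi hik)]
      exact desc_mem_of_isBTree hdisj hB hT hi (hg.ne_root hdisj hi hik)
  · intro I hI h2 hanti hunion
    have hroot : (Ts k).root ∉ I := (Ts k).root_notMem_of_antichain hI h2 hanti
    have heq : ∀ i ∈ I, T.desc i = (Ts k).desc i := fun i hi =>
      hg.desc_eq hdisj (hI hi) (hg.ne_root hdisj (hI hi) fun h => hroot (h ▸ hi))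
    refine hT.2 I (hI.trans (subset_biUnion_of_mem S (mem_univ k))) h2
      (fun a ha b hb hab => ?_) ?_
    · rw [heq a ha, heq b hb]
      exact hanti a ha b hb hab
    · rw [biUnion_congr rfl heq]
      exact mem_union_left _ (mem_biUnion.2 ⟨k, mem_univ k, hunion⟩)

lemma Glue.isBTree (hdisj : Pairwise (Disjoint on S)) (hB : ∀ k, IsConnBuildingSet (S k) (B k))
    (hg : Glue j Ts T) (hTs : ∀ k, IsBTree (S k) (B k) (Ts k)) :
    IsBTree (univ.biUnion S) (univ.biUnion B ∪ {univ.biUnion S}) T := by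
  constructor
  · intro i hi
    obtain ⟨k, -, hik⟩ := mem_biUnion.1 hi
    by_cases hiT : i = T.root
    · rw [hiT, T.desc_root]
      exact mem_union_right _ (mem_singleton_self _)
    · rw [hg.desc_eq hdisj hik hiT]
      exact mem_union_left _ (mem_biUnion.2 ⟨k, mem_univ k, (hTs k).1 i hik⟩)
  · intro I hI h2 hanti hunion
    have hroot : T.root ∉ I := T.root_notMem_of_antichain hI h2 hanti
    rcases mem_union.1 hunion with hmem | hmem
    · obtain ⟨m, -, hm⟩ := mem_biUnion.1 hmem
      have hIm : I ⊆ S m := fun i hi =>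
        ((hB m).1.1 _ hm).1 (mem_biUnion.2 ⟨i, hi, T.mem_desc_self (hI hi)⟩)
      have heq : ∀ i ∈ I, T.desc i = (Ts m).desc i := fun i hi =>
        hg.desc_eq hdisj (hIm hi) fun h => hroot (h ▸ hi)
      refine (hTs m).2 I hIm h2 (fun a ha b hb hab => ?_)
        (by rwa [← biUnion_congr rfl heq])
      rw [← heq a ha, ← heq b hb]
      exact hanti a ha b hb hab
    · have hrootU : T.root ∈ I.biUnion T.desc := by
        rw [mem_singleton.1 hmem]
        exact T.root_mem
      obtain ⟨i, hi, hri⟩ := mem_biUnion.1 hrootU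
      exact T.root_notMem_desc (fun h => hroot (h ▸ hi)) hri

end BTree

/-- Here `j : Fin r` is `0`-indexed, so the paper's `r − j` reads `r − 1 − j`. -/
theorem combined_building_set_trees_general
    (r : ℕ)
    (S : Fin r → Finset ℕ) (B : Fin r → Finset (Finset ℕ))
    (hdisj : ∀ i j, i ≠ j → Disjoint (S i) (S j))
    (horder : ∀ i j : Fin r, i < j → ∀ x ∈ S i, ∀ y ∈ S j, x < y)
    (hB : ∀ i, IsConnBuildingSet (S i) (B i))
    (Sc : Finset ℕ) (hSc : Sc = Finset.univ.biUnion S)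
    (Bc : Finset (Finset ℕ)) (hBc : Bc = Finset.univ.biUnion B ∪ {Sc}) :
    (∀ T : RTree Sc, IsBTree Sc Bc T ↔
      ∃ (j : Fin r) (Ts : ∀ k, RTree (S k)),
        (∀ k, IsBTree (S k) (B k) (Ts k)) ∧ Glue j Ts T) ∧
    ∀ (T : RTree Sc) (j : Fin r) (Ts : ∀ k, RTree (S k)),
      (∀ k, IsBTree (S k) (B k) (Ts k)) → Glue j Ts T →
      T.des = (r - 1 - (j : ℕ)) + ∑ k : Fin r, (Ts k).des := by
  subst hSc hBc
  refine ⟨fun T => ⟨fun hT => ?_, ?_⟩, fun T j Ts _ hg => hg.des_eq hdisj horder⟩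
  · obtain ⟨j, Ts, hg⟩ := exists_glue_of_isBTree hdisj hB hT
    exact ⟨j, Ts, hg.isBTree_block hdisj hB hT, hg⟩
  · rintro ⟨j, Ts, hTs, hg⟩
    exact hg.isBTree hdisj hB hTs

/-- Let `B₁, …, B_r` be connected building sets on pairwise
disjoint sets `S₁, …, S_r` with `max Sᵢ < min Sⱼ` for `i < j`, and let `B` be
the combined connected building set on `S = ⋃ Sᵢ`.  The `B`-trees are exactly
the trees obtained by choosing `j` and `Bᵢ`-trees `Tᵢ` and connecting the root
of each `T_k`, `k ≠ j`, to the root of `T_j`; moreover such a tree has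
`des T = (r − j) + ∑ₖ des T_k` (here `j` is `0`-indexed, so `r − j` becomes
`r − 1 − j`). -/
theorem combined_building_set_trees
    (r : ℕ) (hr : 0 < r)
    (S : Fin r → Finset ℕ) (B : Fin r → Finset (Finset ℕ))
    (hpos : ∀ i, ∀ x ∈ S i, 0 < x)
    (hdisj : ∀ i j, i ≠ j → Disjoint (S i) (S j))
    (horder : ∀ i j : Fin r, i < j → ∀ x ∈ S i, ∀ y ∈ S j, x < y)
    (hB : ∀ i, IsConnBuildingSet (S i) (B i))
    (Sc : Finset ℕ) (hSc : Sc = Finset.univ.biUnion S)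
    (Bc : Finset (Finset ℕ)) (hBc : Bc = Finset.univ.biUnion B ∪ {Sc}) :
    (∀ T : RTree Sc, IsBTree Sc Bc T ↔
      ∃ (j : Fin r) (Ts : ∀ k, RTree (S k)),
        (∀ k, IsBTree (S k) (B k) (Ts k)) ∧ Glue j Ts T) ∧
    ∀ (T : RTree Sc) (j : Fin r) (Ts : ∀ k, RTree (S k)),
      (∀ k, IsBTree (S k) (B k) (Ts k)) → Glue j Ts T →
      T.des = (r - 1 - (j : ℕ)) + ∑ k : Fin r, (Ts k).des :=
  combined_building_set_trees_general r S B hdisj horder hB Sc hSc Bc hBc
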